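/- For every good encoding ⟦·⟧ from π_mix into π_a and P ≔ (ā + a) | (b̄ + b.✓): every T ∈ π_a with ⟦P⟧ ⟹ T satisfies T ⇓̸. -/

import Mathlib

set_option maxHeartbeats 1000000

/-! # Common definitions: the π-calculus with mixed choice (π_mix) and the
asynchronous π-calculus (π_a), their structural congruence and reduction
semantics, symmetric networks and symmetric executions, contexts, and
Gorla's quality criteria for encodings. -/

/-- Names. -/
abbrev Name : Type := ℕ

/-- The single-name substitution `{m/n}` mapping `n` to `m` and every other
name to itself. -/
def rename (n m : Name) : Name → Name := fun k => if k = n then m else k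

/-! ## The asynchronous π-calculus π_a -/

/-- Processes of the asynchronous π-calculus π_a:
`P ::= (νn)P | P₁ | P₂ | !P | 0 | ȳ⟨z⟩ | y(x).P | [a=b]P | ✓`. -/
inductive PiA : Type
  | nil : PiA
  | res : Name → PiA → PiA
  | par : PiA → PiA → PiA
  | repl : PiA → PiA
  | out : Name → Name → PiA
  | inp : Name → Name → PiA → PiA
  | mtch : Name → Name → PiA → PiA
  | succ : PiA
  deriving DecidableEq

namespace PiA

/-- Application of a substitution to a π_a process. -/
def subst (σ : Name → Name) : PiA → PiA
  | nil => nil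
  | res n P => res (σ n) (subst σ P)
  | par P Q => par (subst σ P) (subst σ Q)
  | repl P => repl (subst σ P)
  | out y z => out (σ y) (σ z)
  | inp y x P => inp (σ y) (σ x) (subst σ P)
  | mtch a b P => mtch (σ a) (σ b) (subst σ P)
  | succ => succ

/-- All names of a π_a process. -/
def names : PiA → Finset Name
  | nil => ∅
  | res n P => insert n (names P)
  | par P Q => names P ∪ names Q
  | repl P => names P
  | out y z => {y, z}
  | inp y x P => insert y (insert x (names P))
  | mtch a b P => insert a (insert b (names P))
  | succ => ∅

/-- Free names of a π_a process. -/
def fn : PiA → Finset Name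
  | nil => ∅
  | res n P => (fn P).erase n
  | par P Q => fn P ∪ fn Q
  | repl P => fn P
  | out y z => {y, z}
  | inp y x P => insert y ((fn P).erase x)
  | mtch a b P => insert a (insert b (fn P))
  | succ => ∅

/-- Structural congruence of π_a: the least congruence containing
α-conversion and the standard structural axioms. -/
inductive Cong : PiA → PiA → Prop
  | refl (P) : Cong P P
  | symm {P Q} : Cong P Q → Cong Q P
  | trans {P Q R} : Cong P Q → Cong Q R → Cong P R
  | resC (n) {P Q} : Cong P Q → Cong (res n P) (res n Q)
  | parC {P P' Q Q'} : Cong P P' → Cong Q Q' → Cong (par P Q) (par P' Q')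
  | replC {P Q} : Cong P Q → Cong (repl P) (repl Q)
  | inpC (y x) {P Q} : Cong P Q → Cong (inp y x P) (inp y x Q)
  | mtchC (a b) {P Q} : Cong P Q → Cong (mtch a b P) (mtch a b Q)
  | alphaRes {n m : Name} {P} : m ∉ names P →
      Cong (res n P) (res m (subst (rename n m) P))
  | alphaInp {y x x' : Name} {P} : x' ∉ names P →
      Cong (inp y x P) (inp y x' (subst (rename x x') P))
  | parNil (P) : Cong (par P nil) P
  | parComm (P Q) : Cong (par P Q) (par Q P)
  | parAssoc (P Q R) : Cong (par P (par Q R)) (par (par P Q) R)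
  | mtchId (a : Name) (P) : Cong (mtch a a P) P
  | replUnfold (P) : Cong (repl P) (par P (repl P))
  | resNil (n : Name) : Cong (res n nil) nil
  | resSwap (n m : Name) (P) : Cong (res n (res m P)) (res m (res n P))
  | resPar {n : Name} {P} (Q) : n ∉ fn P →
      Cong (par P (res n Q)) (res n (par P Q))

/-- The reduction relation ⟼ of π_a. -/
inductive Step : PiA → PiA → Prop
  | com (y x z : Name) (P) :
      Step (par (inp y x P) (out y z)) (subst (rename x z) P)
  | parS {P P'} (Q) : Step P P' → Step (par P Q) (par P' Q)
  | resS (n : Name) {P P'} : Step P P' → Step (res n P) (res n P')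
  | congS {P P' Q Q'} : Cong P P' → Step P' Q' → Cong Q' Q → Step P Q

/-- The reflexive-transitive closure ⟹ of reduction in π_a. -/
abbrev Steps : PiA → PiA → Prop := Relation.ReflTransGen Step

/-- `P` contains a top-level unguarded occurrence of ✓, i.e. `P ≡ P'' | ✓`. -/
def HasTopSuccess (P : PiA) : Prop := ∃ P'', Cong P (par P'' succ)

/-- `P` may lead to success: `P⇓`. -/
def May (P : PiA) : Prop := ∃ P', Steps P P' ∧ HasTopSuccess P'

/-- `P ⟼^ω`: `P` has an infinite sequence of reduction steps. -/
def Diverges (P : PiA) : Prop :=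
  ∃ seq : ℕ → PiA, seq 0 = P ∧ ∀ i, Step (seq i) (seq (i + 1))

end PiA

/-! ## Networks and symmetric executions in π_a -/

/-- The parallel composition `P₁ | … | Pₙ` of a list of processes. -/
def parList : List PiA → PiA
  | [] => PiA.nil
  | [P] => P
  | P :: Q :: rest => PiA.par P (parList (Q :: rest))

/-- The restriction `(νx̃)P` of a process by a sequence of names. -/
def resList : List Name → PiA → PiA
  | [], P => P
  | n :: ns, P => PiA.res n (resList ns P)

/-- `P` is a symmetric network of degree `n`: `P = (νx̃)(P₁ | … | Pₙ)` where
`Pᵢ = σ^(i-1)(P₁)` for a symmetry relation `σ` with `σⁿ = id`. -/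
def SymNetwork (n : ℕ) (P : PiA) : Prop :=
  ∃ (xs : List Name) (Ps : List PiA) (σ : Name → Name),
    Ps.length = n ∧ σ^[n] = id ∧
    (∀ i < n, Ps.getD i PiA.nil = PiA.subst (σ^[i]) (Ps.getD 0 PiA.nil)) ∧
    P = resList xs (parList Ps)

/-- `seq` (of length `len`, `none` meaning infinite) is a symmetric execution
of degree `n`: it starts at a symmetric network of degree `n`, returns to a
symmetric network of degree `n` after every `n`-th step, and is either
infinite or terminates in a symmetric network of degree `n`. -/
def IsSymExecution (n : ℕ) (seq : ℕ → PiA) (len : Option ℕ) : Prop :=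
  SymNetwork n (seq 0) ∧
  match len with
  | none =>
      (∀ i, PiA.Step (seq i) (seq (i + 1))) ∧
      (∀ k, SymNetwork n (seq (n * k)))
  | some m =>
      (∀ i < m, PiA.Step (seq i) (seq (i + 1))) ∧
      (∀ T, ¬ PiA.Step (seq m) T) ∧
      (∀ k, n * k ≤ m → SymNetwork n (seq (n * k))) ∧
      SymNetwork n (seq m)

/-! ## The π-calculus with mixed choice π_mix -/

/-- Prefixes (guards) `μ ::= y(x) | ȳ⟨z⟩`. -/
inductive Guard : Type
  | inp : Name → Name → Guard
  | out : Name → Name → Guard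
  deriving DecidableEq

/-- Application of a substitution to a guard. -/
def Guard.subst (σ : Name → Name) : Guard → Guard
  | .inp y x => .inp (σ y) (σ x)
  | .out y z => .out (σ y) (σ z)

/-- Processes of π_mix:
`P ::= (νn)P | P₁ | P₂ | !P | Σ_{i∈I} μᵢ.Pᵢ | ✓`; `0` is the empty sum. -/
inductive PiM : Type
  | res : Name → PiM → PiM
  | par : PiM → PiM → PiM
  | repl : PiM → PiM
  | sum : List (Guard × PiM) → PiM
  | succ : PiM

/-- The empty sum `0` of π_mix. -/
def zeroM : PiM := .sum []

mutual
  /-- Application of a substitution to a π_mix process. -/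
  def substM (σ : Name → Name) : PiM → PiM
    | .res n P => .res (σ n) (substM σ P)
    | .par P Q => .par (substM σ P) (substM σ Q)
    | .repl P => .repl (substM σ P)
    | .sum gs => .sum (substSummands σ gs)
    | .succ => .succ
  /-- Application of a substitution to a list of summands. -/
  def substSummands (σ : Name → Name) :
      List (Guard × PiM) → List (Guard × PiM)
    | [] => []
    | (g, P) :: rest => (g.subst σ, substM σ P) :: substSummands σ rest
end

mutual
  /-- All names of a π_mix process. -/
  def namesM : PiM → Finset Name
    | .res n P => insert n (namesM P)
    | .par P Q => namesM P ∪ namesM Q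
    | .repl P => namesM P
    | .sum gs => namesSummands gs
    | .succ => ∅
  /-- All names of a list of summands. -/
  def namesSummands : List (Guard × PiM) → Finset Name
    | [] => ∅
    | (.inp y x, P) :: rest =>
        insert y (insert x (namesM P)) ∪ namesSummands rest
    | (.out y z, P) :: rest =>
        insert y (insert z (namesM P)) ∪ namesSummands rest
end

mutual
  /-- Free names of a π_mix process. -/
  def fnM : PiM → Finset Name
    | .res n P => (fnM P).erase n
    | .par P Q => fnM P ∪ fnM Q
    | .repl P => fnM P
    | .sum gs => fnSummands gs
    | .succ => ∅
  /-- Free names of a list of summands. -/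
  def fnSummands : List (Guard × PiM) → Finset Name
    | [] => ∅
    | (.inp y x, P) :: rest => insert y ((fnM P).erase x) ∪ fnSummands rest
    | (.out y z, P) :: rest => insert y (insert z (fnM P)) ∪ fnSummands rest
end

/-- Structural congruence of π_mix. -/
inductive CongM : PiM → PiM → Prop
  | refl (P) : CongM P P
  | symm {P Q} : CongM P Q → CongM Q P
  | trans {P Q R} : CongM P Q → CongM Q R → CongM P R
  | resC (n : Name) {P Q} : CongM P Q → CongM (.res n P) (.res n Q)
  | parC {P P' Q Q'} : CongM P P' → CongM Q Q' → CongM (.par P Q) (.par P' Q')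
  | replC {P Q} : CongM P Q → CongM (.repl P) (.repl Q)
  | alphaRes {n m : Name} {P} : m ∉ namesM P →
      CongM (.res n P) (.res m (substM (rename n m) P))
  | alphaInp {gs₁ gs₂ : List (Guard × PiM)} {y x x' : Name} {P} :
      x' ∉ namesM P →
      CongM (.sum (gs₁ ++ (Guard.inp y x, P) :: gs₂))
            (.sum (gs₁ ++ (Guard.inp y x', substM (rename x x') P) :: gs₂))
  | sumPerm {gs gs' : List (Guard × PiM)} : gs.Perm gs' →
      CongM (.sum gs) (.sum gs')
  | parNil (P) : CongM (.par P zeroM) P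
  | parComm (P Q) : CongM (.par P Q) (.par Q P)
  | parAssoc (P Q R) : CongM (.par P (.par Q R)) (.par (.par P Q) R)
  | replUnfold (P) : CongM (.repl P) (.par P (.repl P))
  | resNil (n : Name) : CongM (.res n zeroM) zeroM
  | resSwap (n m : Name) (P) : CongM (.res n (.res m P)) (.res m (.res n P))
  | resPar {n : Name} {P} (Q) : n ∉ fnM P →
      CongM (.par P (.res n Q)) (.res n (.par P Q))

/-- The reduction relation ⟼ of π_mix:
`(…+ y(x).P +…) | (…+ ȳ⟨z⟩.Q +…) ⟼ P{z/x} | Q`, closed under parallel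
composition, restriction and structural congruence. -/
inductive StepM : PiM → PiM → Prop
  | com {gs₁ gs₂ : List (Guard × PiM)} {y x z : Name} {P Q : PiM} :
      (Guard.inp y x, P) ∈ gs₁ → (Guard.out y z, Q) ∈ gs₂ →
      StepM (.par (.sum gs₁) (.sum gs₂)) (.par (substM (rename x z) P) Q)
  | parS {P P'} (Q) : StepM P P' → StepM (.par P Q) (.par P' Q)
  | resS (n : Name) {P P'} : StepM P P' → StepM (.res n P) (.res n P')
  | congS {P P' Q Q'} : CongM P P' → StepM P' Q' → CongM Q' Q → StepM P Q

/-- The reflexive-transitive closure ⟹ of reduction in π_mix. -/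
abbrev StepsM : PiM → PiM → Prop := Relation.ReflTransGen StepM

/-- `S` contains a top-level unguarded occurrence of ✓, i.e. `S ≡ S'' | ✓`. -/
def HasTopSuccessM (S : PiM) : Prop := ∃ S'', CongM S (.par S'' .succ)

/-- `S` may lead to success: `S⇓`. -/
def MayM (S : PiM) : Prop := ∃ S', StepsM S S' ∧ HasTopSuccessM S'

/-- `S ⟼^ω`: `S` has an infinite sequence of reduction steps. -/
def DivergesM (S : PiM) : Prop :=
  ∃ seq : ℕ → PiM, seq 0 = S ∧ ∀ i, StepM (seq i) (seq (i + 1))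

/-- `seq` (of length `len`, `none` meaning infinite) is a maximal execution:
it is either infinite or terminates in a process with no reduction step. -/
def IsMaxExecutionM (seq : ℕ → PiM) (len : Option ℕ) : Prop :=
  match len with
  | none => ∀ i, StepM (seq i) (seq (i + 1))
  | some m => (∀ i < m, StepM (seq i) (seq (i + 1))) ∧ ∀ T, ¬ StepM (seq m) T

/-! ## α-equivalence on π_a -/

/-- α-conversion ≡α on π_a: the least congruence allowing renaming of
bound names (avoiding name clashes). -/
inductive AlphaA : PiA → PiA → Prop
  | refl (P) : AlphaA P P
  | symm {P Q} : AlphaA P Q → AlphaA Q P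
  | trans {P Q R} : AlphaA P Q → AlphaA Q R → AlphaA P R
  | resC (n : Name) {P Q} : AlphaA P Q → AlphaA (.res n P) (.res n Q)
  | parC {P P' Q Q'} : AlphaA P P' → AlphaA Q Q' → AlphaA (.par P Q) (.par P' Q')
  | replC {P Q} : AlphaA P Q → AlphaA (.repl P) (.repl Q)
  | inpC (y x : Name) {P Q} : AlphaA P Q → AlphaA (.inp y x P) (.inp y x Q)
  | mtchC (a b : Name) {P Q} : AlphaA P Q → AlphaA (.mtch a b P) (.mtch a b Q)
  | alphaRes {n m : Name} {P} : m ∉ PiA.names P →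
      AlphaA (.res n P) (.res m (PiA.subst (rename n m) P))
  | alphaInp {y x x' : Name} {P} : x' ∉ PiA.names P →
      AlphaA (.inp y x P) (.inp y x' (PiA.subst (rename x x') P))

/-! ## Contexts of π_a -/

/-- `k`-ary contexts of π_a: π_a-terms with holes `·ᵢ`, `i : Fin k`. -/
inductive CtxA : ℕ → Type
  | hole {k} : Fin k → CtxA k
  | nil {k} : CtxA k
  | res {k} : Name → CtxA k → CtxA k
  | par {k} : CtxA k → CtxA k → CtxA k
  | repl {k} : CtxA k → CtxA k
  | out {k} : Name → Name → CtxA k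
  | inp {k} : Name → Name → CtxA k → CtxA k
  | mtch {k} : Name → Name → CtxA k → CtxA k
  | succ {k} : CtxA k

/-- Filling the holes of a context with processes. -/
def CtxA.fill {k : ℕ} : CtxA k → (Fin k → PiA) → PiA
  | .hole i, f => f i
  | .nil, _ => .nil
  | .res n C, f => .res n (C.fill f)
  | .par C D, f => .par (C.fill f) (D.fill f)
  | .repl C, f => .repl (C.fill f)
  | .out y z, _ => .out y z
  | .inp y x C, f => .inp y x (C.fill f)
  | .mtch a b C, f => .mtch a b (C.fill f)
  | .succ, _ => .succ

/-- The number of occurrences of hole `·ᵢ` in a context. -/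
def CtxA.holeCount {k : ℕ} : CtxA k → Fin k → ℕ
  | .hole i, j => if i = j then 1 else 0
  | .nil, _ => 0
  | .res _ C, j => C.holeCount j
  | .par C D, j => C.holeCount j + D.holeCount j
  | .repl C, j => C.holeCount j
  | .out _ _, _ => 0
  | .inp _ _ C, j => C.holeCount j
  | .mtch _ _ C, j => C.holeCount j
  | .succ, _ => 0

/-! ## Operators of π_mix -/

/-- The operators of π_mix: restriction, parallel composition, replication,
a sum operator for every finite list of prefixes, and ✓. -/
inductive MixOp : Type
  | res : Name → MixOp
  | par : MixOp
  | repl : MixOp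
  | sum : List Guard → MixOp
  | succ : MixOp

/-- The arity of a π_mix operator. -/
def MixOp.arity : MixOp → ℕ
  | .res _ => 1
  | .par => 2
  | .repl => 1
  | .sum gs => gs.length
  | .succ => 0

/-- Applying a π_mix operator to arguments. -/
def MixOp.apply : (op : MixOp) → (Fin op.arity → PiM) → PiM
  | .res n, f => .res n (f ⟨0, by simp [MixOp.arity]⟩)
  | .par, f => .par (f ⟨0, by simp [MixOp.arity]⟩) (f ⟨1, by simp [MixOp.arity]⟩)
  | .repl, f => .repl (f ⟨0, by simp [MixOp.arity]⟩)
  | .sum gs, f => .sum (List.ofFn fun i : Fin gs.length => (gs.get i, f i))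
  | .succ, _ => .succ

/-! ## Quality criteria for encodings (Gorla) -/

/-- Criterion 1 (Compositionality): for every operator `op` of π_mix and
every set of names `N` there is a context `C_op^N` such that
`⟦op(S₁,…,S_k)⟧ = C_op^N(⟦S₁⟧,…,⟦S_k⟧)` whenever `fn(S₁) ∪ … ∪ fn(S_k) = N`. -/
def Compositional (enc : PiM → PiA) : Prop :=
  ∀ (op : MixOp) (N : Finset Name), ∃ C : CtxA op.arity,
    ∀ f : Fin op.arity → PiM,
      (Finset.univ.biUnion fun i => fnM (f i)) = N →
      enc (op.apply f) = C.fill (fun i => enc (f i))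

/-- A renaming policy keeps distinct names distinct:
`n ≠ m` implies `φ(n) ∩ φ(m) = ∅`. -/
def PolicyOK (φ : Name → List Name) : Prop :=
  ∀ n m : Name, n ≠ m → ∀ x ∈ φ n, x ∉ φ m

/-- Criterion 2 (Name invariance) w.r.t. a renaming policy `φ`:
`⟦σ(S)⟧ ≡α σ'(⟦S⟧)` if `σ` is injective and `⟦σ(S)⟧ ≍ σ'(⟦S⟧)` otherwise,
where `σ'` is such that `φ(σ(a)) = σ'(φ(a))` for every name `a`. -/
def NameInvariant (enc : PiM → PiA) (equiv : PiA → PiA → Prop)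
    (φ : Name → List Name) : Prop :=
  ∀ (S : PiM) (σ : Name → Name), ∃ σ' : Name → Name,
    (∀ a : Name, φ (σ a) = (φ a).map σ') ∧
    (Function.Injective σ →
      AlphaA (enc (substM σ S)) (PiA.subst σ' (enc S))) ∧
    (¬ Function.Injective σ →
      equiv (enc (substM σ S)) (PiA.subst σ' (enc S)))

/-- Operational completeness: `S ⟹ S'` implies `⟦S⟧ ⟹ ≍ ⟦S'⟧`. -/
def OperationallyComplete (enc : PiM → PiA) (equiv : PiA → PiA → Prop) : Prop :=
  ∀ S S', StepsM S S' → ∃ T, PiA.Steps (enc S) T ∧ equiv T (enc S')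

/-- Operational soundness: `⟦S⟧ ⟹ T` implies `S ⟹ S'` and `T ⟹ ≍ ⟦S'⟧`
for some `S'`. -/
def OperationallySound (enc : PiM → PiA) (equiv : PiA → PiA → Prop) : Prop :=
  ∀ S T, PiA.Steps (enc S) T →
    ∃ S' T', StepsM S S' ∧ PiA.Steps T T' ∧ equiv T' (enc S')

/-- Criterion 4 (Divergence reflection): `⟦S⟧ ⟼^ω` implies `S ⟼^ω`. -/
def DivergenceReflecting (enc : PiM → PiA) : Prop :=
  ∀ S, PiA.Diverges (enc S) → DivergesM S

/-- Criterion 5 (Success sensitiveness): `S⇓` iff `⟦S⟧⇓`. -/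
def SuccessSensitive (enc : PiM → PiA) : Prop :=
  ∀ S, MayM S ↔ PiA.May (enc S)

/-- `≍` is success respecting: `P⇓` and `Q⇓̸` imply `P ≭ Q`. -/
def SuccessRespecting (equiv : PiA → PiA → Prop) : Prop :=
  ∀ T₁ T₂, PiA.May T₁ → ¬ PiA.May T₂ → ¬ equiv T₁ T₂

/-- A good encoding from π_mix into π_a w.r.t. a success-respecting
behavioural equivalence `≍` on π_a and a renaming policy `φ`: it is
compositional, name invariant, operationally corresponding, divergence
reflecting and success sensitive. -/
structure GoodEncoding (enc : PiM → PiA) (equiv : PiA → PiA → Prop)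
    (φ : Name → List Name) : Prop where
  equivEquivalence : Equivalence equiv
  successRespecting : SuccessRespecting equiv
  policyOK : PolicyOK φ
  compositional : Compositional enc
  nameInvariant : NameInvariant enc equiv φ
  complete : OperationallyComplete enc equiv
  sound : OperationallySound enc equiv
  divergenceReflecting : DivergenceReflecting enc
  successSensitive : SuccessSensitive enc

/-! ## The concrete counterexample terms (prefixes CCS-like, objects omitted) -/

/-- The sum `ā + a`. -/
def aSum (a : Name) : PiM := .sum [(Guard.out a a, zeroM), (Guard.inp a a, zeroM)]

/-- The sum `b̄ + b.✓`. -/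
def bSum (b : Name) : PiM := .sum [(Guard.out b b, zeroM), (Guard.inp b b, .succ)]

/-- `P ≔ (ā + a) | (b̄ + b.✓)`. -/
def Pterm (a b : Name) : PiM := .par (aSum a) (bSum b)

/-- `Q ≔ P | P`. -/
def Qterm (a b : Name) : PiM := .par (Pterm a b) (Pterm a b)

/-- The sum `ā + b + b.✓`. -/
def rSum1 (a b : Name) : PiM :=
  .sum [(Guard.out a a, zeroM), (Guard.inp b b, zeroM), (Guard.inp b b, .succ)]

/-- The sum `b̄ + a + a.✓`. -/
def rSum2 (a b : Name) : PiM :=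
  .sum [(Guard.out b b, zeroM), (Guard.inp a a, zeroM), (Guard.inp a a, .succ)]

/-- `R ≔ (ā + b + b.✓) | (b̄ + a + a.✓)`. -/
def Rterm (a b : Name) : PiM := .par (rSum1 a b) (rSum2 a b)

/-! Since `a ≠ b`, the two sums of `P` share no channel, so `P` has neither a reduction
nor an unguarded ✓. Hence `P⇓̸`, so `⟦P⟧⇓̸` by success sensitiveness, which rules out
`T⇓` for every derivative `T` of `⟦P⟧`. That `P` is stuck up to ≡ is seen on an
abstraction: the multiset of unguarded ✓s and sums of a process, each sum recorded by
the channels of its guards. Without unguarded replication this view is invariant under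
structural congruence, and a reduction needs two sums in it that share a channel. -/

theorem Multiset.eq_and_eq_or_eq_and_eq_of_pair_le {α : Type*} {x y a b : α}
    (h : x ::ₘ {y} ≤ a ::ₘ {b}) : (x = a ∧ y = b) ∨ (x = b ∧ y = a) := by
  have heq := Multiset.eq_of_le_of_card_le h (by simp)
  rcases Multiset.cons_eq_cons.mp heq with ⟨rfl, hyb⟩ | ⟨-, cs, hy, hx⟩
  · exact Or.inl ⟨rfl, Multiset.singleton_inj.mp hyb⟩
  · have hcs : cs = 0 := by simpa using congrArg Multiset.card hy
    subst hcs
    exact Or.inr ⟨(Multiset.singleton_inj.mp hx).symm, Multiset.singleton_inj.mp hy⟩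

def Guard.subject : Guard → Name
  | .inp y _ => y
  | .out y _ => y

@[simp] theorem Guard.subject_subst (σ : Name → Name) (g : Guard) :
    (g.subst σ).subject = σ g.subject := by
  cases g <;> rfl

theorem substSummands_eq_map (σ : Name → Name) :
    ∀ gs : List (Guard × PiM),
      substSummands σ gs = gs.map fun g => (g.1.subst σ, substM σ g.2)
  | [] => rfl
  | (_, _) :: rest => by simp [substSummands, substSummands_eq_map σ rest]

theorem subject_mem_fnSummands :
    ∀ {gs : List (Guard × PiM)} {g : Guard × PiM}, g ∈ gs → g.1.subject ∈ fnSummands gs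
  | (.inp _ _, _) :: rest, _, h | (.out _ _, _) :: rest, _, h => by
      rcases List.mem_cons.mp h with rfl | h
      · simp [fnSummands, Guard.subject]
      · simp [fnSummands, subject_mem_fnSummands h]

mutual
theorem fnM_subset_namesM : ∀ P : PiM, fnM P ⊆ namesM P
  | .res n P => by
      simpa [fnM, namesM] using (Finset.erase_subset n (fnM P)).trans
        ((fnM_subset_namesM P).trans (Finset.subset_insert n _))
  | .par P Q => Finset.union_subset_union (fnM_subset_namesM P) (fnM_subset_namesM Q)
  | .repl P => fnM_subset_namesM P
  | .sum gs => fnSummands_subset_namesSummands gs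
  | .succ => le_rfl

theorem fnSummands_subset_namesSummands :
    ∀ gs : List (Guard × PiM), fnSummands gs ⊆ namesSummands gs
  | [] => le_rfl
  | (.inp y x, P) :: rest => by
      refine Finset.union_subset_union (Finset.insert_subset_insert y ?_)
        (fnSummands_subset_namesSummands rest)
      exact (Finset.erase_subset x _).trans
        ((fnM_subset_namesM P).trans (Finset.subset_insert x _))
  | (.out y z, P) :: rest =>
      Finset.union_subset_union
        (Finset.insert_subset_insert y (Finset.insert_subset_insert z (fnM_subset_namesM P)))
        (fnSummands_subset_namesSummands rest)
end

namespace PiM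

inductive TopAtom
  | success
  | sum (chans : Multiset (Option Name))

namespace TopAtom

def chans : TopAtom → Multiset (Option Name)
  | success => 0
  | sum G => G

def map (f : Option Name → Option Name) : TopAtom → TopAtom
  | success => success
  | sum G => sum (G.map f)

@[simp] theorem chans_map (f : Option Name → Option Name) (A : TopAtom) :
    (A.map f).chans = A.chans.map f := by
  cases A <;> rfl

theorem map_map (f g : Option Name → Option Name) (A : TopAtom) :
    (A.map g).map f = A.map (f ∘ g) := by
  cases A <;> simp [map]

theorem map_congr {f g : Option Name → Option Name} {A : TopAtom}
    (h : ∀ c ∈ A.chans, f c = g c) : A.map f = A.map g := by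
  cases A <;> simp_all [map, chans]

theorem map_eq_self {f : Option Name → Option Name} {A : TopAtom}
    (h : ∀ c ∈ A.chans, f c = c) : A.map f = A := by
  cases A <;> simp_all [map, chans]

end TopAtom

def hide (n : Name) (c : Option Name) : Option Name := if c = some n then none else c

theorem hide_comm (n m : Name) : hide n ∘ hide m = hide m ∘ hide n := by
  funext c
  simp only [Function.comp_apply, hide]
  split_ifs <;> simp_all

def guardChan (g : Guard × PiM) : Option Name := some g.1.subject

/-- The unguarded ✓s and nonempty sums of a process, a sum being recorded by the
channels of its guards. Channels bound by an enclosing restriction all become `none`;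
identifying them only over-approximates the possible communications. -/
def view : PiM → Multiset TopAtom
  | .res n P => (view P).map (TopAtom.map (hide n))
  | .par P Q => view P + view Q
  | .repl _ => 0
  | .sum gs => if gs = [] then 0 else {.sum (gs.map guardChan)}
  | .succ => {.success}

theorem mem_fnM_of_mem_view :
    ∀ {P : PiM} {A : TopAtom} {k : Name}, A ∈ view P → some k ∈ A.chans → k ∈ fnM P
  | .res n P, A, k, hA, hk => by
      obtain ⟨B, hB, rfl⟩ := Multiset.mem_map.mp hA
      obtain ⟨c, hc, hck⟩ := Multiset.mem_map.mp (TopAtom.chans_map _ B ▸ hk)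
      unfold hide at hck
      split_ifs at hck with hcn
      subst hck
      exact Finset.mem_erase.mpr ⟨fun h => hcn (h ▸ rfl), mem_fnM_of_mem_view hB hc⟩
  | .par P Q, A, k, hA, hk => by
      rcases Multiset.mem_add.mp hA with hA | hA
      · exact Finset.mem_union_left _ (mem_fnM_of_mem_view hA hk)
      · exact Finset.mem_union_right _ (mem_fnM_of_mem_view hA hk)
  | .repl _, _, _, hA, _ => absurd hA (Multiset.notMem_zero _)
  | .sum gs, A, k, hA, hk => by
      simp only [view] at hA
      split_ifs at hA
      · exact absurd hA (Multiset.notMem_zero _)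
      · obtain rfl := Multiset.mem_singleton.mp hA
        obtain ⟨g, hg, hgk⟩ := List.mem_map.mp (Multiset.mem_coe.mp hk)
        simp only [guardChan, Option.some.injEq] at hgk
        exact hgk ▸ subject_mem_fnSummands hg
  | .succ, A, k, hA, hk => by
      obtain rfl := Multiset.mem_singleton.mp hA
      exact absurd hk (Multiset.notMem_zero _)

theorem mem_namesM_of_mem_view {P : PiM} {A : TopAtom} {k : Name} (hA : A ∈ view P)
    (hk : some k ∈ A.chans) : k ∈ namesM P :=
  fnM_subset_namesM P (mem_fnM_of_mem_view hA hk)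

theorem view_substM (σ : Name → Name) :
    ∀ P : PiM, Set.InjOn σ (namesM P) →
      view (substM σ P) = (view P).map (TopAtom.map (Option.map σ))
  | .res k P, hσ => by
      have hσP : Set.InjOn σ (namesM P) :=
        hσ.mono (by simp [namesM, Finset.coe_insert, Set.subset_insert])
      simp only [substM, view, view_substM σ P hσP, Multiset.map_map]
      refine Multiset.map_congr rfl fun A hA => ?_
      simp only [Function.comp_apply, TopAtom.map_map]
      refine TopAtom.map_congr fun c hc => ?_
      rcases c with _ | j
      · rfl
      have hj : j ∈ namesM (.res k P) :=
        Finset.mem_insert_of_mem (mem_namesM_of_mem_view hA hc)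
      have hk : k ∈ namesM (.res k P) := Finset.mem_insert_self k _
      have : σ j = σ k ↔ j = k := ⟨fun h => hσ hj hk h, congrArg σ⟩
      by_cases hjk : j = k <;> simp [hide, this, hjk]
  | .par P Q, hσ => by
      simp only [namesM, Finset.coe_union] at hσ
      simp [substM, view, view_substM σ P (hσ.mono Set.subset_union_left),
        view_substM σ Q (hσ.mono Set.subset_union_right)]
  | .repl _, _ => rfl
  | .sum gs, _ => by
      simp only [substM, view, substSummands_eq_map, List.map_eq_nil_iff]
      split_ifs
      · rfl
      · simp [TopAtom.map, guardChan, Function.comp_def]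
  | .succ, _ => rfl

def NoUnguardedRepl : PiM → Prop
  | .res _ P => NoUnguardedRepl P
  | .par P Q => NoUnguardedRepl P ∧ NoUnguardedRepl Q
  | .repl _ => False
  | .sum _ => True
  | .succ => True

theorem noUnguardedRepl_substM (σ : Name → Name) :
    ∀ P : PiM, NoUnguardedRepl (substM σ P) ↔ NoUnguardedRepl P
  | .res _ P => noUnguardedRepl_substM σ P
  | .par P Q => and_congr (noUnguardedRepl_substM σ P) (noUnguardedRepl_substM σ Q)
  | .repl _ | .sum _ | .succ => Iff.rfl

theorem noUnguardedRepl_congr {P Q : PiM} (h : CongM P Q) :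
    NoUnguardedRepl P ↔ NoUnguardedRepl Q := by
  induction h with
  | alphaRes _ => exact (noUnguardedRepl_substM _ _).symm
  | symm _ ih => exact ih.symm
  | trans _ _ ih₁ ih₂ => exact ih₁.trans ih₂
  | resC _ _ ih => exact ih
  | parC _ _ ih₁ ih₂ => exact and_congr ih₁ ih₂
  | parNil => simp [NoUnguardedRepl, zeroM]
  | parComm => exact and_comm
  | parAssoc => exact and_assoc.symm
  | resNil => simp [NoUnguardedRepl, zeroM]
  | replUnfold => simp [NoUnguardedRepl]
  | _ => exact Iff.rfl

theorem view_res_of_notMem_fnM {n : Name} {P : PiM} (hn : n ∉ fnM P) :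
    (view P).map (TopAtom.map (hide n)) = view P := by
  refine (Multiset.map_congr rfl fun A hA => TopAtom.map_eq_self fun c hc => ?_).trans
    (Multiset.map_id _)
  rcases c with _ | k
  · rfl
  · have : k ≠ n := fun h => hn (h ▸ mem_fnM_of_mem_view hA hc)
    simp [hide, this]

theorem view_res_alpha {n m : Name} {P : PiM} (hm : m ∉ namesM P) :
    view (.res n P) = view (.res m (substM (rename n m) P)) := by
  have hinj : Set.InjOn (rename n m) (namesM P) := by
    intro x hx y hy hxy
    have hxm : x ≠ m := fun h => hm (h ▸ hx)
    have hym : y ≠ m := fun h => hm (h ▸ hy)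
    unfold rename at hxy
    split_ifs at hxy <;> simp_all
  simp only [view, view_substM _ P hinj, Multiset.map_map]
  refine Multiset.map_congr rfl fun A hA => ?_
  simp only [Function.comp_apply, TopAtom.map_map]
  refine TopAtom.map_congr fun c hc => ?_
  rcases c with _ | k
  · rfl
  · have : k ≠ m := fun h => hm (h ▸ mem_namesM_of_mem_view hA hc)
    by_cases hkn : k = n <;> simp [hide, rename, hkn, this]

theorem view_congr {P Q : PiM} (h : CongM P Q) (hP : NoUnguardedRepl P) :
    view P = view Q := by
  induction h with
  | refl => rfl
  | symm h ih => exact (ih ((noUnguardedRepl_congr h).mpr hP)).symm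
  | trans h _ ih₁ ih₂ => exact (ih₁ hP).trans (ih₂ ((noUnguardedRepl_congr h).mp hP))
  | resC n _ ih => simp only [view, ih hP]
  | parC _ _ ih₁ ih₂ => simp only [view, ih₁ hP.1, ih₂ hP.2]
  | replC => rfl
  | alphaRes hm => exact view_res_alpha hm
  | alphaInp => simp [view, guardChan, Guard.subject]
  | sumPerm hperm =>
      simp only [view, ← List.isEmpty_iff, hperm.isEmpty_eq,
        Multiset.coe_eq_coe.mpr (hperm.map guardChan)]
  | parNil => simp [view, zeroM]
  | parComm => exact add_comm _ _
  | parAssoc => exact (add_assoc _ _ _).symm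
  | replUnfold => exact hP.elim
  | resNil => simp [view, zeroM]
  | resSwap n m P =>
      simp only [view, Multiset.map_map]
      congr 1
      funext A
      simp only [Function.comp_apply, TopAtom.map_map, hide_comm]
  | resPar Q hn => simp [view, view_res_of_notMem_fnM hn]

def Interacts (M : Multiset TopAtom) : Prop :=
  ∃ G₁ G₂ c, TopAtom.sum G₁ ::ₘ {TopAtom.sum G₂} ≤ M ∧ c ∈ G₁ ∧ c ∈ G₂

theorem Interacts.mono {M N : Multiset TopAtom} (hMN : M ≤ N) : Interacts M → Interacts N
  | ⟨G₁, G₂, c, hle, hc₁, hc₂⟩ => ⟨G₁, G₂, c, hle.trans hMN, hc₁, hc₂⟩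

theorem Interacts.map (f : Option Name → Option Name) {M : Multiset TopAtom} :
    Interacts M → Interacts (M.map (TopAtom.map f))
  | ⟨G₁, G₂, c, hle, hc₁, hc₂⟩ =>
      ⟨G₁.map f, G₂.map f, f c, Multiset.map_le_map hle,
        Multiset.mem_map_of_mem f hc₁, Multiset.mem_map_of_mem f hc₂⟩

theorem not_interacts_pair {A B : Multiset (Option Name)} (hAB : Disjoint A B) :
    ¬ Interacts (TopAtom.sum A ::ₘ {TopAtom.sum B}) := by
  rintro ⟨G₁, G₂, c, hle, hc₁, hc₂⟩
  rcases Multiset.eq_and_eq_or_eq_and_eq_of_pair_le hle with ⟨h₁, h₂⟩ | ⟨h₁, h₂⟩ <;>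
    simp only [TopAtom.sum.injEq] at h₁ h₂ <;> subst h₁ h₂
  · exact Multiset.disjoint_left.mp hAB hc₁ hc₂
  · exact Multiset.disjoint_left.mp hAB hc₂ hc₁

theorem interacts_view_of_stepM {S T : PiM} (h : StepM S T) (hS : NoUnguardedRepl S) :
    Interacts (view S) := by
  induction h with
  | @com gs₁ gs₂ y x z P Q h₁ h₂ =>
      have hne₁ : gs₁ ≠ [] := List.ne_nil_of_mem h₁
      have hne₂ : gs₂ ≠ [] := List.ne_nil_of_mem h₂
      refine ⟨gs₁.map guardChan, gs₂.map guardChan, some y, ?_, ?_, ?_⟩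
      · simp [view, hne₁, hne₂, Multiset.singleton_add]
      · exact Multiset.mem_coe.mpr (List.mem_map_of_mem h₁)
      · exact Multiset.mem_coe.mpr (List.mem_map_of_mem h₂)
  | parS _ _ ih => exact (ih hS.1).mono (Multiset.le_add_right _ _)
  | resS n _ ih => exact (ih hS).map (hide n)
  | congS h₁ _ h₂ ih =>
      rw [view_congr h₁ hS]
      exact ih ((noUnguardedRepl_congr h₁).mp hS)

theorem success_mem_view_of_hasTopSuccessM {S : PiM} (hS : NoUnguardedRepl S)
    (h : HasTopSuccessM S) : TopAtom.success ∈ view S := by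
  obtain ⟨S', hS'⟩ := h
  rw [view_congr hS' hS]
  exact Multiset.mem_add.mpr (Or.inr (Multiset.mem_singleton_self _))

theorem not_mayM_of_stuck {S : PiM} (hstep : ∀ T, ¬ StepM S T) (hsucc : ¬ HasTopSuccessM S) :
    ¬ MayM S := by
  rintro ⟨S', hSS', hS'⟩
  rcases Relation.ReflTransGen.cases_head hSS' with rfl | ⟨T, hST, -⟩
  · exact hsucc hS'
  · exact hstep T hST

theorem view_Pterm (a b : Name) :
    view (Pterm a b) =
      TopAtom.sum {some a, some a} ::ₘ {TopAtom.sum {some b, some b}} := rfl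

theorem not_mayM_Pterm {a b : Name} (hab : a ≠ b) : ¬ MayM (Pterm a b) := by
  have hP : NoUnguardedRepl (Pterm a b) := ⟨trivial, trivial⟩
  refine not_mayM_of_stuck (fun T hT => ?_) (fun h => ?_)
  · refine not_interacts_pair ?_ (view_Pterm a b ▸ interacts_view_of_stepM hT hP)
    simp [Multiset.disjoint_left, hab]
  · simpa [view_Pterm] using success_mem_view_of_hasTopSuccessM hP h

end PiM

theorem PiA.May.of_steps {P T : PiA} (h : PiA.Steps P T) (hT : PiA.May T) : PiA.May P :=
  let ⟨T', hTT', hT'⟩ := hT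
  ⟨T', h.trans hTT', hT'⟩

theorem good_encoding_P_never_reaches_success
    (a b : Name) (hab : a ≠ b)
    (enc : PiM → PiA) (equiv : PiA → PiA → Prop) (φ : Name → List Name)
    (hgood : GoodEncoding enc equiv φ) :
    ∀ T : PiA, PiA.Steps (enc (Pterm a b)) T → ¬ PiA.May T := by
  intro T hT hmay
  exact PiM.not_mayM_Pterm hab ((hgood.successSensitive _).mpr (hmay.of_steps hT))
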